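/- Let u and v be binary words of the same length n that are not conjugate, each containing at least one 0 and at least one 1, with n_{0,u} = n_{0,v}, n_{1,u} = n_{1,v} ≤ n_{0,u}, and l_u = l_v. If x_u ≠ x_v, then there exists a distinguishing subword for u and v of length at most 3n/4 + 4. -/

import Mathlib

open List

/-- Two binary words are conjugate (cyclic rotations of each other). -/
def ConjWords (x y : List Bool) : Prop := ∃ s t : List Bool, x = s ++ t ∧ y = t ++ s

/-- `s` is a cyclic (scattered) subword of `w`: some conjugate of `s` is a
subsequence of some conjugate of `w`. -/
def CyclicSubword (s w : List Bool) : Prop :=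
  ∃ s' w' : List Bool, ConjWords s s' ∧ ConjWords w w' ∧ s'.Sublist w'

/-- `w` is a distinguishing subword for `u` and `v`: it is a cyclic subword of
exactly one of them. -/
def Distinguishing (w u v : List Bool) : Prop :=
  Xor' (CyclicSubword w u) (CyclicSubword w v)

/-- Cyclic access to the letters of a word. -/
def cget (w : List Bool) (i : ℕ) : Bool := w.getD (i % w.length) false

/-- The number of blocks of 0's of the cyclic word `w` (equivalently, of blocks of 1's,
for a word containing both letters): positions carrying a `0` whose cyclic
predecessor carries a `1`. -/
noncomputable def lCount (w : List Bool) : ℕ :=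
  {i | i < w.length ∧ cget w i = false ∧ cget w (i + w.length - 1) = true}.ncard

/-- The maximal length of a cyclic run of 0's in `w`. -/
noncomputable def xMax (w : List Bool) : ℕ :=
  sSup {k | ∃ i, ∀ j < k, cget w (i + j) = false}

/-- There is a maximal run (block) of 0's of length exactly `k` starting at position `i`. -/
def IsZeroBlockAt (w : List Bool) (i k : ℕ) : Prop :=
  cget w (i + w.length - 1) = true ∧ (∀ j < k, cget w (i + j) = false) ∧ cget w (i + k) = true

/-- The maximal length of a block of 0's of length smaller than `xMax w` (0 if none). -/
noncomputable def yMax (w : List Bool) : ℕ :=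
  sSup {k | k < xMax w ∧ ∃ i, IsZeroBlockAt w i k}

/-- The number of big blocks (blocks of 0's of maximal length) of `w`. -/
noncomputable def aCount (w : List Bool) : ℕ :=
  {i | i < w.length ∧ IsZeroBlockAt w i (xMax w)}.ncard

/-- `r`-th power of a word. -/
def listPow (z : List Bool) (r : ℕ) : List Bool := (List.replicate r z).flatten

/-- The word `0^t 1^m`. -/
def blk (t m : ℕ) : List Bool := List.replicate t false ++ List.replicate m true

/-- Special words (of the first, second or third type). -/
def Special (w : List Bool) : Prop :=
  2 ≤ lCount w ∧ ∃ t m : ℕ, 0 < t ∧ 0 < m ∧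
    (ConjWords w (listPow (blk t m) (lCount w)) ∨
     ConjWords w (listPow (blk t m) (lCount w - 1) ++ blk t (2 * m)) ∨
     ∃ i : ℕ, i ≤ lCount w - 2 ∧
       ConjWords w (listPow (blk t m) i ++ blk t (2 * m) ++
         listPow (blk t m) (lCount w - i - 2) ++ blk t (2 * m)))

/-- A cyclic word is periodic if it is conjugate to a proper power. -/
def PeriodicWord (w : List Bool) : Prop :=
  ∃ z : List Bool, ∃ r : ℕ, 2 ≤ r ∧ ConjWords w (listPow z r)

/-- Position `i` lies in a big block of 0's of `w`. -/
def InBigBlock (w : List Bool) (i : ℕ) : Prop :=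
  ∃ s < xMax w, ∀ j < xMax w, cget w (i + w.length - s + j) = false

open Classical in
/-- `w_long`: the cyclic subword of `w` consisting of all 1's together with the
0's lying in big blocks. -/
noncomputable def wLong (w : List Bool) : List Bool :=
  (List.range w.length).filterMap (fun i =>
    if cget w i = true ∨ InBigBlock w i then some (cget w i) else none)

/-- Access to letters of a word indexed by `ZMod`. -/
def zget (w : List Bool) (i : ZMod w.length) : Bool := w.getD i.val false

/-- `f` is an occurrence of `s` in the cyclic word `w`. -/
def IsOccurrence (s w : List Bool) (f : ZMod s.length → ZMod w.length) : Prop :=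
  (∀ i, zget w (f i) = zget s i) ∧
  ∃ j : ZMod s.length, ∃ p : ZMod w.length, ∃ t : Fin s.length → ℕ,
    StrictMono t ∧ (∀ i, t i ≤ w.length - 1) ∧
    ∀ i : Fin s.length, f ((i.val : ZMod s.length) + j) = p + (t i : ZMod w.length)

/-- `s` is a unioccurrent subword of `w`: it has exactly one occurrence in `w`. -/
def Unioccurrent (s w : List Bool) : Prop := ∃! f, IsOccurrence s w f

private lemma conj_refl (x : List Bool) : ConjWords x x := ⟨x, [], by simp, by simp⟩

private lemma conj_symm {x y : List Bool} (h : ConjWords x y) : ConjWords y x := by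
  obtain ⟨s, t, hx, hy⟩ := h
  exact ⟨t, s, hy, hx⟩

private lemma conj_trans {x y z : List Bool} (h1 : ConjWords x y) (h2 : ConjWords y z) :
    ConjWords x z := by
  obtain ⟨s, t, rfl, hy⟩ := h1
  obtain ⟨p, q, hy2, rfl⟩ := h2
  have key : t ++ s = p ++ q := by rw [← hy, ← hy2]
  rcases List.append_eq_append_iff.1 key with ⟨a, ha1, ha2⟩ | ⟨a, ha1, ha2⟩
  · -- ha1 : p = t ++ a, ha2 : s = a ++ q
    exact ⟨a, q ++ t, by rw [ha2]; simp, by rw [ha1]; simp⟩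
  · -- ha1 : t = p ++ a, ha2 : q = a ++ s
    exact ⟨s ++ p, a, by rw [ha1]; simp, by rw [ha2]; simp⟩

private lemma conj_count {x y : List Bool} (h : ConjWords x y) (a : Bool) :
    y.count a = x.count a := by
  obtain ⟨s, t, rfl, rfl⟩ := h
  simp [List.count_append]; omega

private lemma conj_length {x y : List Bool} (h : ConjWords x y) :
    y.length = x.length := by
  obtain ⟨s, t, rfl, rfl⟩ := h
  simp [List.length_append]; omega

private lemma cget_small {w : List Bool} {i : ℕ} (h : i < w.length) : cget w i = w[i] := by
  unfold cget
  rw [Nat.mod_eq_of_lt h, List.getD_eq_getElem _ _ h]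

private lemma cget_add_length (w : List Bool) (i : ℕ) : cget w (i + w.length) = cget w i := by
  unfold cget
  rw [Nat.add_mod_right]

private lemma cget_conj {w w' : List Bool} (h : ConjWords w w') :
    ∃ r, ∀ y, cget w' y = cget w (y + r) := by
  obtain ⟨s, t, rfl, rfl⟩ := h
  refine ⟨s.length, fun y => ?_⟩
  rcases Nat.eq_zero_or_pos (s ++ t).length with hn | hn
  · rw [List.length_append] at hn
    have hs : s = [] := List.eq_nil_of_length_eq_zero (by omega)
    have ht : t = [] := List.eq_nil_of_length_eq_zero (by omega)
    subst hs; subst ht; simp [cget]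
  · have hlen : (t ++ s).length = (s ++ t).length := by simp [List.length_append]; omega
    set n := (s ++ t).length with hndef
    have hj : y % n < n := Nat.mod_lt _ hn
    have hj2 : (y + s.length) % n < n := Nat.mod_lt _ hn
    unfold cget
    rw [hlen]
    rw [List.getD_eq_getElem _ _ (by omega : y % n < (t ++ s).length),
        List.getD_eq_getElem _ _ (by omega : (y + s.length) % n < (s ++ t).length)]
    have hmod : (y + s.length) % n = (y % n + s.length) % n := by
      rw [Nat.mod_add_mod]
    rcases Nat.lt_or_ge (y % n) t.length with hc | hc
    · have h1 : (t ++ s)[y % n] = t[y % n] := List.getElem_append_left hc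
      have hlt : y % n + s.length < n := by
        have : n = s.length + t.length := by simp [hndef, List.length_append]
        omega
      have h2 : (y + s.length) % n = y % n + s.length := by
        rw [hmod, Nat.mod_eq_of_lt hlt]
      rw [h1]
      have h3 : (s ++ t)[(y + s.length) % n]'(by omega) = t[(y + s.length) % n - s.length]'(by
          simp [List.length_append] at *; omega) := by
        apply List.getElem_append_right
        omega
      rw [h3]
      congr 1
      omega
    · have hnst : n = s.length + t.length := by simp [hndef, List.length_append]
      have h1 : (t ++ s)[y % n]'(by omega) = s[y % n - t.length]'(by
          simp [List.length_append] at *; omega) := List.getElem_append_right hc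
      have h2 : (y + s.length) % n = y % n - t.length := by
        rw [hmod]
        have : y % n + s.length = (y % n - t.length) + n := by omega
        rw [this, Nat.add_mod_right, Nat.mod_eq_of_lt (by omega)]
      rw [h1]
      have h3 : (s ++ t)[(y + s.length) % n]'(by omega) = s[(y + s.length) % n]'(by
          rw [h2]; omega) := by
        apply List.getElem_append_left
      rw [h3]
      congr 1
      omega

private lemma cget_all_false {w : List Bool} (hw1 : true ∈ w) {i k : ℕ}
    (hk : w.length ≤ k) (h : ∀ j < k, cget w (i + j) = false) : False := by
  obtain ⟨idx, hidx, hval⟩ := List.mem_iff_getElem.1 hw1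
  have hn : 0 < w.length := by omega
  set n := w.length with hndef
  have hdm : n * (i / n) + i % n = i := Nat.div_add_mod i n
  have hr : i % n < n := Nat.mod_lt _ hn
  by_cases hcase : i % n ≤ idx
  · have hj : idx - i % n < k := by omega
    have hh := h (idx - i % n) hj
    have heq : i + (idx - i % n) = n * (i / n) + idx := by omega
    rw [heq] at hh
    unfold cget at hh
    rw [Nat.mul_add_mod, Nat.mod_eq_of_lt hidx, List.getD_eq_getElem _ _ hidx, hval] at hh
    simp at hh
  · have hj : idx + n - i % n < k := by omega
    have hh := h (idx + n - i % n) hj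
    have heq : i + (idx + n - i % n) = n * (i / n + 1) + idx := by
      have h5 : n * (i / n + 1) = n * (i / n) + n := by ring
      omega
    rw [heq] at hh
    unfold cget at hh
    rw [Nat.mul_add_mod, Nat.mod_eq_of_lt hidx, List.getD_eq_getElem _ _ hidx, hval] at hh
    simp at hh

private lemma xMax_bdd {w : List Bool} (hw1 : true ∈ w) :
    BddAbove {k | ∃ i, ∀ j < k, cget w (i + j) = false} := by
  refine ⟨w.length, fun k hk => ?_⟩
  by_contra hlt
  push_neg at hlt
  obtain ⟨i, hi⟩ := hk
  exact cget_all_false hw1 (le_of_lt hlt) hi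

private lemma xMax_spec {w : List Bool} (hw1 : true ∈ w) (hw0 : false ∈ w) :
    ∃ r, r < w.length ∧ 0 < xMax w ∧ xMax w < w.length ∧
      (∀ j < xMax w, cget w (r + j) = false) ∧
      cget w (r + xMax w) = true ∧ cget w (r + (w.length - 1)) = true := by
  have hbdd := xMax_bdd hw1
  have hne : Set.Nonempty {k | ∃ i, ∀ j < k, cget w (i + j) = false} := ⟨0, 0, by omega⟩
  have hmem : ∃ i, ∀ j < xMax w, cget w (i + j) = false := Nat.sSup_mem hne hbdd
  obtain ⟨i, hi⟩ := hmem
  have hn : 0 < w.length := List.length_pos_iff.2 (by rintro rfl; simp at hw1)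
  set n := w.length with hndef
  set X := xMax w with hXdef
  have hshift : ∀ j, cget w (i % n + j) = cget w (i + j) := by
    intro j; unfold cget; rw [Nat.mod_add_mod]
  have hrun : ∀ j < X, cget w (i % n + j) = false := fun j hj => (hshift j).trans (hi j hj)
  have hXn : X < n := by
    by_contra hge
    push_neg at hge
    exact cget_all_false hw1 hge hi
  have hX0 : 0 < X := by
    obtain ⟨idx, hidx, hval⟩ := List.mem_iff_getElem.1 hw0
    have h1 : 1 ∈ {k | ∃ i, ∀ j < k, cget w (i + j) = false} := by
      refine ⟨idx, fun j hj => ?_⟩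
      interval_cases j
      rw [Nat.add_zero, cget_small hidx, hval]
    exact lt_of_lt_of_le one_pos (le_csSup hbdd h1)
  have hsup : sSup {k | ∃ i, ∀ j < k, cget w (i + j) = false} = X := rfl
  have hnotmem : ¬ (X + 1 ∈ {k | ∃ i, ∀ j < k, cget w (i + j) = false}) := by
    intro hmem
    have := le_csSup hbdd hmem
    omega
  have htrue1 : cget w (i % n + X) = true := by
    by_contra hf
    have hf' : cget w (i % n + X) = false := by
      revert hf; cases (cget w (i % n + X)) <;> simp
    exact hnotmem ⟨i % n, fun j hj => by
      rcases Nat.lt_or_ge j X with h | h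
      · exact hrun j h
      · have : j = X := by omega
        rw [this]; exact hf'⟩
  have htrue2 : cget w (i % n + (n - 1)) = true := by
    by_contra hf
    have hf' : cget w (i % n + (n - 1)) = false := by
      revert hf; cases (cget w (i % n + (n - 1))) <;> simp
    refine hnotmem ⟨i % n + (n - 1), fun j hj => ?_⟩
    rcases Nat.eq_zero_or_pos j with rfl | hj0
    · rw [Nat.add_zero]; exact hf'
    · have heq : i % n + (n - 1) + j = (i % n + (j - 1)) + n := by omega
      rw [heq, cget_add_length]
      exact hrun (j - 1) (by omega)
  exact ⟨i % n, Nat.mod_lt _ hn, hX0, hXn, hrun, htrue1, htrue2⟩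

private lemma exists_conj_maxrun {w : List Bool} (hw1 : true ∈ w) (hw0 : false ∈ w) :
    ∃ t : List Bool, ConjWords w (List.replicate (xMax w) false ++ t) ∧
      t.length = w.length - xMax w ∧ t[0]? = some true ∧ t[t.length - 1]? = some true := by
  obtain ⟨r, hr, hX0, hXn, hrun, ht1, ht2⟩ := xMax_spec hw1 hw0
  have hlw' : (w.drop r ++ w.take r).length = w.length := by
    simp [List.length_append]; omega
  have hkey : ∀ j, (hj : j < w.length) →
      (w.drop r ++ w.take r)[j]'(by omega) = cget w (r + j) := by
    intro j hj
    rcases Nat.lt_or_ge j (w.length - r) with hc | hc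
    · have hdl : j < (w.drop r).length := by simp; omega
      rw [List.getElem_append_left hdl, List.getElem_drop, cget_small (by omega)]
    · have hge : (w.drop r).length ≤ j := by simp; omega
      rw [List.getElem_append_right hge, List.getElem_take]
      have h2 : r + j = (j - (w.drop r).length) + w.length := by simp; omega
      rw [h2, cget_add_length, cget_small (by simp; omega)]
  have htake : (w.drop r ++ w.take r).take (xMax w) = List.replicate (xMax w) false := by
    have hmem : ∀ x ∈ (w.drop r ++ w.take r).take (xMax w), x = false := by
      intro x hx
      obtain ⟨j, hj, rfl⟩ := List.mem_iff_getElem.1 hx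
      have hj' : j < xMax w := by
        have := hj
        rw [List.length_take] at this
        omega
      rw [List.getElem_take, hkey j (by omega)]
      exact hrun j hj'
    have h := List.eq_replicate_of_mem hmem
    rwa [List.length_take, hlw', Nat.min_eq_left (le_of_lt hXn)] at h
  have hconj : ConjWords w (w.drop r ++ w.take r) :=
    ⟨w.take r, w.drop r, (List.take_append_drop r w).symm, rfl⟩
  refine ⟨(w.drop r ++ w.take r).drop (xMax w), ?_, ?_, ?_, ?_⟩
  · rw [← htake, List.take_append_drop]
    exact hconj
  · simp [List.length_drop, hlw']
  · have hlen : 0 < ((w.drop r ++ w.take r).drop (xMax w)).length := by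
      simp [List.length_drop, hlw']; omega
    rw [List.getElem?_eq_getElem hlen]
    have : ((w.drop r ++ w.take r).drop (xMax w))[0]'hlen = cget w (r + xMax w) := by
      rw [List.getElem_drop]
      exact hkey (xMax w + 0) (by omega)
    rw [this, ht1]
  · have hlen : ((w.drop r ++ w.take r).drop (xMax w)).length = w.length - xMax w := by
      simp [List.length_drop, hlw']
    have hlt : w.length - xMax w - 1 < ((w.drop r ++ w.take r).drop (xMax w)).length := by
      omega
    rw [hlen, List.getElem?_eq_getElem hlt]
    have : ((w.drop r ++ w.take r).drop (xMax w))[w.length - xMax w - 1]'hlt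
        = cget w (r + (w.length - 1)) := by
      rw [List.getElem_drop]
      have heq : xMax w + (w.length - xMax w - 1) = w.length - 1 := by omega
      rw [hkey (xMax w + (w.length - xMax w - 1)) (by omega)]
      congr 1
      omega
    rw [this, ht2]

private lemma conj_double {Z s' : List Bool} (h : ConjWords (Z ++ Z) s') :
    ∃ a ≤ Z.length, s' = Z.drop a ++ (Z ++ Z.take a) := by
  obtain ⟨f, e, hfe, rfl⟩ := h
  obtain ⟨k, hk⟩ : ∃ k, f.length = k := ⟨f.length, rfl⟩
  have hf : f = (Z ++ Z).take k := by rw [← hk, hfe, List.take_left]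
  have he : e = (Z ++ Z).drop k := by rw [← hk, hfe, List.drop_left]
  have hlen : k ≤ Z.length + Z.length := by
    have h2 := congrArg List.length hfe
    simp [List.length_append] at h2
    omega
  rcases le_or_gt k Z.length with hc | hc
  · refine ⟨k, hc, ?_⟩
    rw [hf, he, List.take_append_of_le_length hc, List.drop_append_of_le_length hc]
    simp [List.append_assoc]
  · refine ⟨k - Z.length, by omega, ?_⟩
    have hsplit : k = Z.length + (k - Z.length) := by omega
    rw [hf, he, hsplit, List.take_length_add_append, List.drop_length_add_append]
    simp [List.append_assoc]

private lemma conj_s2 {b : ℕ} {s' : List Bool}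
    (h : ConjWords ((List.replicate b false ++ [true]) ++ (List.replicate b false ++ [true])) s') :
    ∃ i ≤ b, s' = List.replicate (b - i) false ++
      ([true] ++ (List.replicate b false ++ ([true] ++ List.replicate i false))) := by
  obtain ⟨a, ha, hs⟩ := conj_double h
  have hZlen : (List.replicate b false ++ [true]).length = b + 1 := by simp
  rcases le_or_gt a b with hab | hab
  · refine ⟨a, hab, ?_⟩
    rw [hs, List.drop_append_of_le_length (by simp; omega),
        List.take_append_of_le_length (by simp; omega),
        List.drop_replicate, List.take_replicate, Nat.min_eq_left hab]
    simp [List.append_assoc]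
  · have haeq : a = b + 1 := by omega
    refine ⟨0, by omega, ?_⟩
    rw [hs, haeq]
    have h1 : (List.replicate b false ++ [true]).drop (b + 1) = [] := by
      apply List.drop_eq_nil_of_le
      simp
    have h2 : (List.replicate b false ++ [true]).take (b + 1) =
        List.replicate b false ++ [true] := by
      have h3 := List.take_length (l := List.replicate b false ++ [true])
      rwa [hZlen] at h3
    rw [h1, h2]
    simp [List.append_assoc]

private lemma conj_s1 {c k : ℕ} {s' : List Bool}
    (h : ConjWords (List.replicate c false ++ List.replicate k true) s') :
    (∃ i ≤ c, s' = List.replicate (c - i) false ++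
        (List.replicate k true ++ List.replicate i false)) ∨
    (∃ j ≤ k, s' = List.replicate (k - j) true ++
        (List.replicate c false ++ List.replicate j true)) := by
  obtain ⟨f, e, hfe, rfl⟩ := h
  obtain ⟨m, hm⟩ : ∃ m, f.length = m := ⟨f.length, rfl⟩
  have hf : f = (List.replicate c false ++ List.replicate k true).take m := by
    rw [← hm, hfe, List.take_left]
  have he : e = (List.replicate c false ++ List.replicate k true).drop m := by
    rw [← hm, hfe, List.drop_left]
  have hlen : m ≤ c + k := by
    have h2 := congrArg List.length hfe
    simp [List.length_append] at h2
    omega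
  rcases le_or_gt m c with hc | hc
  · left
    refine ⟨m, hc, ?_⟩
    rw [hf, he, List.take_append_of_le_length (by simp; omega),
        List.drop_append_of_le_length (by simp; omega),
        List.drop_replicate, List.take_replicate, Nat.min_eq_left hc]
    simp [List.append_assoc]
  · right
    refine ⟨m - c, by omega, ?_⟩
    have hsplit : m = (List.replicate c false).length + (m - c) := by
      simp; omega
    rw [hf, he, hsplit, List.take_length_add_append, List.drop_length_add_append,
        List.take_replicate, List.drop_replicate, Nat.min_eq_left (by omega)]
    simp

private lemma shapeI {q m p A B C D E : List Bool} {b : ℕ}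
    (heq : q ++ (m ++ p) = (A ++ B) ++ (C ++ (D ++ E)))
    (hq : ∀ x ∈ q, x = false) (hp : ∀ x ∈ p, x = false)
    (hB : true ∈ B) (hD : true ∈ D)
    (hC : b ≤ C.count false) (hm : m.count false < b) : False := by
  rcases List.append_eq_append_iff.1 heq with ⟨a', ha1, ha2⟩ | ⟨c', hc1, hc2⟩
  · -- ha1 : A ++ B = q ++ a', ha2 : m ++ p = a' ++ (C ++ (D ++ E))
    have ha2' : m ++ p = (a' ++ C) ++ (D ++ E) := by rw [ha2]; simp [List.append_assoc]
    rcases List.append_eq_append_iff.1 ha2' with ⟨w, hw1, hw2⟩ | ⟨w, hw1, hw2⟩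
    · -- hw2 : p = w ++ (D ++ E)
      have hmem : true ∈ p := by
        rw [hw2]; exact List.mem_append_right _ (List.mem_append_left _ hD)
      simpa using hp true hmem
    · -- hw1 : m = (a' ++ C) ++ w
      have hcount := congrArg (List.count false) hw1
      simp [List.count_append] at hcount
      omega
  · -- hc1 : q = (A ++ B) ++ c'
    have hmem : true ∈ q := by
      rw [hc1]; exact List.mem_append_left _ (List.mem_append_right _ hB)
    simpa using hq true hmem

private lemma shapeII {m2 m1 A B C D E : List Bool} {X : ℕ} {b : ℕ}
    (heq : m2 ++ (List.replicate X false ++ m1) = A ++ (B ++ (C ++ (D ++ E))))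
    (hB : true ∈ B) (hD : true ∈ D)
    (hC : b ≤ C.count false)
    (hAE : b ≤ A.count false + E.count false)
    (hm : m1.count false + m2.count false < b) : False := by
  rcases List.append_eq_append_iff.1 heq with ⟨a', ha1, ha2⟩ | ⟨k, hk1, hk2⟩
  · -- ha1 : A = m2 ++ a', ha2 : replicate X false ++ m1 = a' ++ (B ++ (C ++ (D ++ E)))
    have ha2' : List.replicate X false ++ m1 = (a' ++ B) ++ (C ++ (D ++ E)) := by
      rw [ha2]; simp [List.append_assoc]
    rcases List.append_eq_append_iff.1 ha2' with ⟨w, hw1, hw2⟩ | ⟨w, hw1, hw2⟩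
    · -- hw2 : m1 = w ++ (C ++ (D ++ E))
      have hcount := congrArg (List.count false) hw2
      simp [List.count_append] at hcount
      omega
    · -- hw1 : replicate X false = (a' ++ B) ++ w
      have hmem : true ∈ List.replicate X false := by
        rw [hw1]; exact List.mem_append_left _ (List.mem_append_right _ hB)
      simpa using List.eq_of_mem_replicate hmem
  · -- hk1 : m2 = A ++ k, hk2 : B ++ (C ++ (D ++ E)) = k ++ (replicate X false ++ m1)
    have hA : A.count false ≤ m2.count false := by
      have := congrArg (List.count false) hk1
      simp [List.count_append] at this
      omega
    have hk2' : ((B ++ C) ++ D) ++ E = (k ++ List.replicate X false) ++ m1 := by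
      simpa [List.append_assoc] using hk2
    rcases List.append_eq_append_iff.1 hk2' with ⟨w, hw1, hw2⟩ | ⟨w, hw1, hw2⟩
    · -- hw1 : k ++ replicate X false = ((B ++ C) ++ D) ++ w, hw2 : E = w ++ m1
      have hw1' : (B ++ C) ++ (D ++ w) = k ++ List.replicate X false := by
        rw [hw1]; simp [List.append_assoc]
      rcases List.append_eq_append_iff.1 hw1' with ⟨z, hz1, hz2⟩ | ⟨z, hz1, hz2⟩
      · -- hz1 : k = (B ++ C) ++ z
        have hcount := congrArg (List.count false) hz1
        have hcm2 := congrArg (List.count false) hk1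
        simp [List.count_append] at hcount hcm2
        omega
      · -- hz2 : replicate X false = z ++ (D ++ w)
        have hmem : true ∈ List.replicate X false := by
          rw [hz2]; exact List.mem_append_right _ (List.mem_append_left _ hD)
        simpa using List.eq_of_mem_replicate hmem
    · -- hw1 : (B++C)++D = (k ++ replicate X false) ++ w, hw2 : m1 = w ++ E
      have hE : E.count false ≤ m1.count false := by
        have := congrArg (List.count false) hw2
        simp [List.count_append] at this
        omega
      omega

private lemma run_le_xMax {w p q r : List Bool} (hw1 : true ∈ w)
    (hconj : ConjWords w (p ++ (q ++ r)))
    (hq : ∀ x ∈ q, x = false) : q.length ≤ xMax w := by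
  have hlen : (p ++ (q ++ r)).length = w.length := by
    obtain ⟨s, t, rfl, h2⟩ := hconj
    rw [h2]; simp [List.length_append]; omega
  obtain ⟨ρ, hρ⟩ := cget_conj hconj
  have hmem : q.length ∈ {k | ∃ i, ∀ j < k, cget w (i + j) = false} := by
    refine ⟨p.length + ρ, fun j hj => ?_⟩
    have h1 : p.length + ρ + j = (p.length + j) + ρ := by omega
    rw [h1, ← hρ]
    have hidx : p.length + j < (p ++ (q ++ r)).length := by
      simp [List.length_append]; omega
    rw [cget_small hidx]
    have h2 : (p ++ (q ++ r))[p.length + j]'hidx = (q ++ r)[p.length + j - p.length]'(by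
        simp [List.length_append]; omega) := List.getElem_append_right (by omega)
    rw [h2]
    have h3 : (q ++ r)[p.length + j - p.length]'(by simp [List.length_append]; omega)
        = q[j]'(by omega) := by
      have h4 : p.length + j - p.length = j := by omega
      simp only [h4]
      exact List.getElem_append_left hj
    rw [h3]
    exact hq _ (List.getElem_mem _)
  have := le_csSup (xMax_bdd hw1) hmem
  exact this

private lemma neg1 {v : List Bool} {c k : ℕ} (hv1 : true ∈ v)
    (hk : v.count true = k) (hc : xMax v < c) :
    ¬ CyclicSubword (List.replicate c false ++ List.replicate k true) v := by
  rintro ⟨s', v', hcs, hcv, hsub⟩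
  rcases conj_s1 hcs with ⟨i, hi, rfl⟩ | ⟨j, hj, rfl⟩
  · obtain ⟨P, W, rfl, hP, hW⟩ := List.append_sublist_iff.1 hsub
    obtain ⟨Q, R, rfl, hQ, hR⟩ := List.append_sublist_iff.1 hW
    have hcv' : (P ++ (Q ++ R)).count true = k := by rw [conj_count hcv true, hk]
    have hQk : k ≤ Q.count true := by simpa using hQ.count_le true
    have hPR : P.count true = 0 ∧ R.count true = 0 := by
      simp [List.count_append] at hcv'; omega
    have hPf : ∀ x ∈ P, x = false := by
      intro x hx
      have : x ≠ true := fun h => by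
        rw [h] at hx
        exact absurd hx (List.count_eq_zero.1 hPR.1)
      simpa using this
    have hRf : ∀ x ∈ R, x = false := by
      intro x hx
      have : x ≠ true := fun h => by
        rw [h] at hx
        exact absurd hx (List.count_eq_zero.1 hPR.2)
      simpa using this
    have hlenP : c - i ≤ P.length := by simpa using hP.length_le
    have hlenR : i ≤ R.length := by simpa using hR.length_le
    have hconj2 : ConjWords v ([] ++ ((R ++ P) ++ Q)) := by
      have h5 : ConjWords (P ++ (Q ++ R)) (R ++ (P ++ Q)) :=
        ⟨P ++ Q, R, by simp [List.append_assoc], rfl⟩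
      have h6 := conj_trans hcv h5
      have : R ++ (P ++ Q) = [] ++ ((R ++ P) ++ Q) := by simp [List.append_assoc]
      rwa [this] at h6
    have hrun := run_le_xMax hv1 hconj2 (fun x hx => by
      rcases List.mem_append.1 hx with h | h
      exacts [hRf x h, hPf x h])
    rw [List.length_append] at hrun
    omega
  · obtain ⟨P, W, rfl, hP, hW⟩ := List.append_sublist_iff.1 hsub
    obtain ⟨Q, R, rfl, hQ, hR⟩ := List.append_sublist_iff.1 hW
    have hcv' : (P ++ (Q ++ R)).count true = k := by rw [conj_count hcv true, hk]
    have hPk : k - j ≤ P.count true := by simpa using hP.count_le true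
    have hRk : j ≤ R.count true := by simpa using hR.count_le true
    have hQt : Q.count true = 0 := by
      simp [List.count_append] at hcv'; omega
    have hQf : ∀ x ∈ Q, x = false := by
      intro x hx
      have : x ≠ true := fun h => by
        rw [h] at hx
        exact absurd hx (List.count_eq_zero.1 hQt)
      simpa using this
    have hlenQ : c ≤ Q.length := by simpa using hQ.length_le
    have hrun := run_le_xMax hv1 hcv hQf
    omega

private lemma neg2 {u m : List Bool} {X b : ℕ}
    (hU : ConjWords u (List.replicate X false ++ m))
    (hm : m.count false < b) :
    ¬ CyclicSubword ((List.replicate b false ++ [true]) ++ (List.replicate b false ++ [true])) u := by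
  rintro ⟨s', u', hcs, hcu, hsub⟩
  obtain ⟨i, hib, rfl⟩ := conj_s2 hcs
  obtain ⟨A, W1, rfl, hA, hW1⟩ := List.append_sublist_iff.1 hsub
  obtain ⟨B, W2, rfl, hB, hW2⟩ := List.append_sublist_iff.1 hW1
  obtain ⟨C, W3, rfl, hC, hW3⟩ := List.append_sublist_iff.1 hW2
  obtain ⟨D, E, rfl, hD, hE⟩ := List.append_sublist_iff.1 hW3
  have hfA : b - i ≤ A.count false := by simpa using hA.count_le false
  have htB : true ∈ B := hB.subset (by simp)
  have hfC : b ≤ C.count false := by simpa using hC.count_le false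
  have htD : true ∈ D := hD.subset (by simp)
  have hfE : i ≤ E.count false := by simpa using hE.count_le false
  have hconj : ConjWords (List.replicate X false ++ m) (A ++ (B ++ (C ++ (D ++ E)))) :=
    conj_trans (conj_symm hU) hcu
  obtain ⟨g, h, hgh, hu'⟩ := hconj
  rcases List.append_eq_append_iff.1 hgh with ⟨a', ha1, ha2⟩ | ⟨c', hc1, hc2⟩
  · -- ha1 : g = replicate X false ++ a', ha2 : m = a' ++ h  (orientation to check)
    -- u' = h ++ g = h ++ (replicate X false ++ a') : shape II with m2 := h, m1 := a'
    have heq : h ++ (List.replicate X false ++ a') = A ++ (B ++ (C ++ (D ++ E))) := by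
      rw [← ha1, ← hu']
    refine shapeII heq htB htD hfC (by omega) ?_
    have := congrArg (List.count false) ha2
    simp [List.count_append] at this
    omega
  · -- hc1 : replicate X false = g ++ c', hc2 : h = c' ++ m
    -- u' = h ++ g = (c' ++ m) ++ g : shape I with q := c', p := g
    have heq : c' ++ (m ++ g) = (A ++ B) ++ (C ++ (D ++ E)) := by
      have h7 : c' ++ (m ++ g) = h ++ g := by rw [hc2]; simp [List.append_assoc]
      rw [h7, ← hu']
      simp [List.append_assoc]
    refine shapeI heq ?_ ?_ htB htD hfC hm
    · intro x hx
      have : x ∈ List.replicate X false := by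
        rw [hc1]; exact List.mem_append_right _ hx
      exact List.eq_of_mem_replicate this
    · intro x hx
      have : x ∈ List.replicate X false := by
        rw [hc1]; exact List.mem_append_left _ hx
      exact List.eq_of_mem_replicate this

private lemma bool_counts_length (l : List Bool) :
    l.count false + l.count true = l.length := by
  induction l with
  | nil => simp
  | cons a l ih => cases a <;> simp [List.count_cons] <;> omega

private lemma conj_single_true {w : List Bool} (h : w.count true = 1) :
    ConjWords w (true :: List.replicate (w.count false) false) := by
  have hmem : true ∈ w := List.count_pos_iff.1 (by omega)
  obtain ⟨S, T, hw⟩ := List.append_of_mem hmem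
  have hcounts : S.count true = 0 ∧ T.count true = 0 := by
    rw [hw] at h
    simp [List.count_append, List.count_cons] at h
    omega
  have hSf : ∀ x ∈ S, x = false := by
    intro x hx
    have : x ≠ true := fun he => by
      rw [he] at hx; exact absurd hx (List.count_eq_zero.1 hcounts.1)
    simpa using this
  have hTf : ∀ x ∈ T, x = false := by
    intro x hx
    have : x ≠ true := fun he => by
      rw [he] at hx; exact absurd hx (List.count_eq_zero.1 hcounts.2)
    simpa using this
  have hScnt : S.count false = S.length := List.count_eq_length.2 (fun b hb => (hSf b hb).symm)
  have hTcnt : T.count false = T.length := List.count_eq_length.2 (fun b hb => (hTf b hb).symm)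
  have hS := List.eq_replicate_of_mem hSf
  have hT := List.eq_replicate_of_mem hTf
  have hfc : w.count false = T.length + S.length := by
    rw [hw]
    simp [List.count_append, List.count_cons, hScnt, hTcnt]
    omega
  refine ⟨S, true :: T, hw, ?_⟩
  rw [hfc]
  have hTS : T ++ S = List.replicate (T.length + S.length) false := by
    rw [List.replicate_add, ← hS, ← hT]
  simp only [List.cons_append]
  rw [hTS]

private lemma conjB {w : List Bool} (hw1 : true ∈ w) (hw0 : false ∈ w)
    (h2 : 2 ≤ w.count true) :
    ∃ t₀ : List Bool, ConjWords w
      (List.replicate (xMax w) false ++ ([true] ++ (t₀ ++ [true]))) ∧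
      xMax w + t₀.count false = w.count false := by
  obtain ⟨t, hconj, hlen, h0, hl⟩ := exists_conj_maxrun hw1 hw0
  have hct : t.count true = w.count true := by
    have := conj_count hconj true
    simpa [List.count_append, List.count_replicate] using this
  have hlen2 : 2 ≤ t.length := by
    have := List.count_le_length (a := true) (l := t)
    omega
  obtain ⟨a, t1, rfl⟩ : ∃ a t1, t = a :: t1 := by
    cases t with
    | nil => simp at hlen2
    | cons a t1 => exact ⟨a, t1, rfl⟩
  have ha : a = true := by simpa using h0
  have hne : t1 ≠ [] := by
    intro h; rw [h] at hlen2; simp at hlen2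
  obtain ⟨t₀, z, rfl⟩ : ∃ t₀ z, t1 = t₀ ++ [z] :=
    ⟨t1.dropLast, t1.getLast hne, (List.dropLast_append_getLast hne).symm⟩
  have hz : z = true := by
    have hidx : (a :: (t₀ ++ [z])).length - 1 = t₀.length + 1 := by
      simp
    rw [hidx] at hl
    have : (a :: (t₀ ++ [z]))[t₀.length + 1]? = (t₀ ++ [z])[t₀.length]? := by
      simp
    rw [this, List.getElem?_concat_length] at hl
    simpa using hl
  subst ha hz
  refine ⟨t₀, ?_, ?_⟩
  · have : (true :: (t₀ ++ [true])) = [true] ++ (t₀ ++ [true]) := by simp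
    rwa [this] at hconj
  · have := conj_count hconj false
    simp [List.count_append] at this
    omega

private lemma mainLemma (n : ℕ) (u v : List Bool)
    (hu : u.length = n) (hv : v.length = n) (huv : ¬ ConjWords u v)
    (hu0 : false ∈ u) (hu1 : true ∈ u) (hv0 : false ∈ v) (hv1 : true ∈ v)
    (h0 : u.count false = v.count false) (h1 : u.count true = v.count true)
    (h10 : u.count true ≤ u.count false)
    (hlt : xMax v < xMax u) :
    ∃ w : List Bool, w ≠ [] ∧ 4 * w.length ≤ 3 * n + 16 ∧ Distinguishing w u v := by
  have hnn : u.count false + u.count true = n := by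
    rw [bool_counts_length, hu]
  obtain ⟨tU, hconjU, hlentU, _, _⟩ := exists_conj_maxrun hu1 hu0
  have hcfU : xMax u + tU.count false = u.count false := by
    have := conj_count hconjU false
    simp [List.count_append, List.count_replicate] at this
    omega
  have hctU : tU.count true = u.count true := by
    have := conj_count hconjU true
    simpa [List.count_append, List.count_replicate] using this
  by_cases hreg : 4 * ((xMax v + 1) + u.count true) ≤ 3 * n + 16
  · -- regime 1
    refine ⟨List.replicate (xMax v + 1) false ++ List.replicate (u.count true) true,
      ?_, ?_, ?_⟩
    · intro h
      have := congrArg List.length h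
      simp at this
    · simpa using hreg
    · refine Or.inl ⟨?_, ?_⟩
      · refine ⟨_, _, conj_refl _, hconjU, ?_⟩
        exact List.Sublist.append
          ((List.replicate_sublist_replicate false).2 (by omega))
          (List.replicate_sublist_iff.2 (le_of_eq hctU.symm))
      · exact neg1 hv1 h1.symm (by omega)
  · -- regime 2
    push_neg at hreg
    set b := tU.count false + 1 with hb
    have h2v : 2 ≤ v.count true := by
      by_contra hlt2
      push_neg at hlt2
      have h1v : v.count true = 1 := by
        have : 0 < v.count true := List.count_pos_iff.2 hv1
        omega
      have h1u : u.count true = 1 := by rw [h1]; exact h1v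
      have cu := conj_single_true h1u
      have cv := conj_single_true h1v
      rw [← h0] at cv
      exact huv (conj_trans cu (conj_symm cv))
    obtain ⟨t₀, hconjV, hcfV⟩ := conjB hv1 hv0 h2v
    have hcfv' : v.count false = u.count false := h0.symm
    have harith : b ≤ xMax v ∧ b ≤ t₀.count false ∧ 4 * (2 * b + 2) ≤ 3 * n + 16 := by
      have h10' : u.count true ≤ u.count false := h10
      omega
    refine ⟨(List.replicate b false ++ [true]) ++ (List.replicate b false ++ [true]),
      ?_, ?_, ?_⟩
    · intro h
      have := congrArg List.length h
      simp at this
    · have : ((List.replicate b false ++ [true]) ++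
          (List.replicate b false ++ [true])).length = 2 * b + 2 := by
        simp; omega
      rw [this]
      exact harith.2.2
    · refine Or.inr ⟨?_, ?_⟩
      · refine ⟨_, _, conj_refl _, hconjV, ?_⟩
        have hsub : List.replicate b false ++ ([true] ++ (List.replicate b false ++ [true]))
            <+ List.replicate (xMax v) false ++ ([true] ++ (t₀ ++ [true])) := by
          refine List.Sublist.append
            ((List.replicate_sublist_replicate false).2 harith.1) ?_
          refine List.Sublist.append (List.Sublist.refl _) ?_
          exact List.Sublist.append
            (List.replicate_sublist_iff.2 harith.2.1)
            (List.Sublist.refl _)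
        have hre : (List.replicate b false ++ [true]) ++ (List.replicate b false ++ [true])
            = List.replicate b false ++ ([true] ++ (List.replicate b false ++ [true])) := by
          simp [List.append_assoc]
        rw [hre]
        exact hsub
      · exact neg2 hconjU (by omega)

theorem statement11 (n : ℕ) (u v : List Bool)
    (hu : u.length = n) (hv : v.length = n) (huv : ¬ ConjWords u v)
    (hu0 : false ∈ u) (hu1 : true ∈ u) (hv0 : false ∈ v) (hv1 : true ∈ v)
    (h0 : u.count false = v.count false) (h1 : u.count true = v.count true)
    (h10 : u.count true ≤ u.count false)
    (hl : lCount u = lCount v)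
    (hx : xMax u ≠ xMax v) :
    ∃ w : List Bool, w ≠ [] ∧ 4 * w.length ≤ 3 * n + 16 ∧ Distinguishing w u v := by
  rcases hx.lt_or_gt with hlt | hlt
  · obtain ⟨w, hw1, hw2, hw3⟩ := mainLemma n v u hv hu (fun h => huv (conj_symm h))
      hv0 hv1 hu0 hu1 h0.symm h1.symm (by rw [← h1, ← h0]; exact h10) hlt
    refine ⟨w, hw1, hw2, ?_⟩
    unfold Distinguishing Xor' Xor at hw3 ⊢
    tauto
  · exact mainLemma n u v hu hv huv hu0 hu1 hv0 hv1 h0 h1 h10 hlt
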